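/- Let O ⊆ [n], I := [n]∖O, f ∈ 𝓡_{n,O}, i ∈ I and j ∈ O. Let β := 1_n − p_{O∖{j}} + p_{(O∪{i})∖{j}} − p_{O∪{i}} + p_n (the chain type for the chain ∅ ⊊ O∖{j} ⊊ (O∪{i})∖{j} ⊊ O∪{i} ⊊ [n], describing superchannels of type structure (j→i)→(I∖{i}→O∖{j})). Then f ≤ β pointwise if and only if f(e^{i,j}) = 0. (In the paper's terminology, f ≤ β expresses the no-signalling relation i ↛_f j, so there is no signalling from i to j in f if and only if f(e^{i,j}) = 0.) -/
import Mathlib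


open Classical

namespace HOT

/-- Binary strings of length `n`, identified with `{0,1}^n`. -/
abbrev Str (n : ℕ) := Fin n → Bool

/-- The all-zeros string `θ`. -/
def theta (n : ℕ) : Str n := fun _ => false

/-- `𝓕_n`: boolean functions on `{0,1}^n` with `f(θ) = 1`. -/
def Fcal (n : ℕ) : Set (Str n → Bool) := {f | f (theta n) = true}

/-- The complement `f* = 1 - f + p_n`. -/
noncomputable def star {n : ℕ} (f : Str n → Bool) : Str n → Bool :=
  fun s => if s = theta n then true else !(f s)

/-- First block `s¹` of a string `s ∈ {0,1}^{m+n}`. -/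
def fstStr {m n : ℕ} (s : Str (m + n)) : Str m := fun i => s (Fin.castAdd n i)

/-- Second block `s²` of a string `s ∈ {0,1}^{m+n}`. -/
def sndStr {m n : ℕ} (s : Str (m + n)) : Str n := fun j => s (Fin.natAdd m j)

/-- Tensor product `(f ⊗ g)(s) = f(s¹) · g(s²)`. -/
noncomputable def tensor {m n : ℕ} (f : Str m → Bool) (g : Str n → Bool) :
    Str (m + n) → Bool :=
  fun s => f (fstStr s) && g (sndStr s)

/-- `f ⅋ g := (f* ⊗ g*)*`. -/
noncomputable def parr {m n : ℕ} (f : Str m → Bool) (g : Str n → Bool) :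
    Str (m + n) → Bool :=
  star (tensor (star f) (star g))

/-- The causal product `f ◁ g` (`f` on the first `m` bits, `g` on the last `n` bits):
`(f ◁ g)(s) = f(s¹)` if `s¹ ≠ θ_m`, else `g(s²)`. -/
noncomputable def causalL {m n : ℕ} (f : Str m → Bool) (g : Str n → Bool) :
    Str (m + n) → Bool :=
  fun s => if fstStr s = theta m then g (sndStr s) else f (fstStr s)

/-- The causal product `g ◁ f` (`f` on the first `m` bits, `g` on the last `n` bits):
`(g ◁ f)(s) = g(s²)` if `s² ≠ θ_n`, else `f(s¹)`. -/
noncomputable def causalR {m n : ℕ} (f : Str m → Bool) (g : Str n → Bool) :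
    Str (m + n) → Bool :=
  fun s => if sndStr s = theta n then f (fstStr s) else g (sndStr s)

/-- `p_T(s) = 1` iff `s_i = 0` for all `i ∈ T`. -/
noncomputable def pSet {n : ℕ} (T : Set (Fin n)) : Str n → Bool :=
  fun s => decide (∀ i ∈ T, s i = false)

/-- The string `e^i` with `1` exactly in position `i`. -/
def eStr {n : ℕ} (i : Fin n) : Str n := fun j => decide (j = i)

/-- The string `e^{i,j}` with `1` exactly in positions `i` and `j`. -/
def e2Str {n : ℕ} (i j : Fin n) : Str n := fun l => decide (l = i ∨ l = j)

/-- Input indices `I_f = {i : f(e^i) = 0}`. -/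
def Iset {n : ℕ} (f : Str n → Bool) : Set (Fin n) := {i | f (eStr i) = false}

/-- Output indices `O_f = {j : f(e^j) = 1}`. -/
def Oset {n : ℕ} (f : Str n → Bool) : Set (Fin n) := {j | f (eStr j) = true}

/-- `f` is a subtype if `p_{I_f} ≤ f ≤ (p_{O_f})*` pointwise. -/
def IsSubtype {n : ℕ} (f : Str n → Bool) : Prop :=
  pSet (Iset f) ≤ f ∧ f ≤ star (pSet (Oset f))

/-- The partial order `≤_O`: `s ≤_O t` iff `s_i ≤ t_i` for `i ∈ O` and `s_i ≥ t_i` for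
`i ∉ O`. -/
def leO {n : ℕ} (O : Set (Fin n)) (s t : Str n) : Prop :=
  ∀ i, (i ∈ O → s i ≤ t i) ∧ (i ∉ O → t i ≤ s i)

/-- `f` is monotone (with respect to `≤_{O_f}`). -/
def MonotoneF {n : ℕ} (f : Str n → Bool) : Prop :=
  ∀ s t, leO (Oset f) s t → f s ≤ f t

/-- The action of a permutation on strings: `σ(s)_i = s_{σ⁻¹(i)}`. -/
def permAct {n : ℕ} (σ : Equiv.Perm (Fin n)) (s : Str n) : Str n := fun i => s (σ⁻¹ i)

/-- `(f ∘ σ)(s) = f(σ(s))`. -/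
def permComp {n : ℕ} (f : Str n → Bool) (σ : Equiv.Perm (Fin n)) : Str n → Bool :=
  fun s => f (permAct σ s)

/-- The inductively defined family `𝓣_n` of type functions. -/
inductive IsType : (n : ℕ) → (Str n → Bool) → Prop
  | one : IsType 1 (fun _ => true)
  | dual {n : ℕ} {f : Str n → Bool} : IsType n f → IsType n (star f)
  | perm {n : ℕ} {f : Str n → Bool} (σ : Equiv.Perm (Fin n)) :
      IsType n f → IsType n (permComp f σ)
  | tens {m n : ℕ} {f : Str m → Bool} {g : Str n → Bool} :
      IsType m f → IsType n g → IsType (m + n) (tensor f g)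

/-- Interpretation of a bit as an integer. -/
def toZ (b : Bool) : ℤ := (b.toNat : ℤ)

/-- `f` is a chain type: `f = Σ_{i=0}^N (-1)^i p_{S_i}` for a strictly increasing chain
`S_0 ⊊ ⋯ ⊊ S_N ⊆ [n]` with `N` even. -/
def IsChainType {n : ℕ} (f : Str n → Bool) : Prop :=
  ∃ N : ℕ, Even N ∧ ∃ S : Fin (N + 1) → Set (Fin n), StrictMono S ∧
    ∀ s : Str n, toZ (f s) = ∑ i : Fin (N + 1), (-1 : ℤ) ^ (i : ℕ) * toZ (pSet (S i) s)

/-- The Möbius transform `f̂_T`. -/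
noncomputable def mobius {n : ℕ} (f : Str n → Bool) (T : Set (Fin n)) : ℤ :=
  ∑ s : Str n, if ∀ j, j ∉ T → s j = true then
    (-1 : ℤ) ^ (∑ j : Fin n, if j ∈ T then (s j).toNat else 0) * toZ (f s)
  else 0

/-- The structure poset `𝓟_f = {T ⊆ [n] : f̂_T ≠ 0}`, ordered by inclusion. -/
noncomputable def structPoset {n : ℕ} (f : Str n → Bool) : Set (Set (Fin n)) :=
  {T | mobius f T ≠ 0}

/-- The label set `L_T = T ∖ ⋃ {S ∈ 𝓟_f : S ⊊ T}`. -/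
noncomputable def labels {n : ℕ} (f : Str n → Bool) (T : Set (Fin n)) : Set (Fin n) :=
  T \ ⋃₀ {S | S ∈ structPoset f ∧ S ⊂ T}

/-- The reduced structure poset `𝓟_f^0`: `∅` (if `∅ ∈ 𝓟_f`) together with all
`T ∈ 𝓟_f` with `L_T ≠ ∅`. -/
noncomputable def reducedPoset {n : ℕ} (f : Str n → Bool) : Set (Set (Fin n)) :=
  {T | T ∈ structPoset f ∧ (T = ∅ ∨ labels f T ≠ ∅)}

/-- The rank `ρ_f(T)`: the length of a longest chain in `𝓟_f` with top element `T`
(this is the length of any maximal such chain in the graded poset `𝓟_f`). -/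
noncomputable def rank {n : ℕ} (f : Str n → Bool) (T : Set (Fin n)) : ℕ :=
  sSup {k | ∃ c : Fin (k + 1) → Set (Fin n), StrictMono c ∧
    (∀ i, c i ∈ structPoset f) ∧ c (Fin.last k) = T}

/-- The rank `r(f)` of the whole poset `𝓟_f`: the common length of its maximal chains. -/
noncomputable def rk {n : ℕ} (f : Str n → Bool) : ℕ :=
  sSup {k | ∃ c : Fin (k + 1) → Set (Fin n), StrictMono c ∧ ∀ i, c i ∈ structPoset f}

/-- `𝕋_i^f = {T ∈ 𝓟_f : i ∈ L_T}`. -/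
noncomputable def Tset {n : ℕ} (f : Str n → Bool) (i : Fin n) : Set (Set (Fin n)) :=
  {T | T ∈ structPoset f ∧ i ∈ labels f T}

/-- The rank `r_f(i)` of an index: the common rank of elements of `𝕋_i^f`, or `r(f)+1`
if `𝕋_i^f = ∅` (a free output). -/
noncomputable def idxRank {n : ℕ} (f : Str n → Bool) (i : Fin n) : ℕ :=
  if (Tset f i).Nonempty then sSup (rank f '' Tset f i) else rk f + 1

/-- `X` is the greatest lower bound of `S` and `T` in the poset `(P, ⊆)`. -/
def IsGLBIn {n : ℕ} (P : Set (Set (Fin n))) (S T X : Set (Fin n)) : Prop :=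
  X ∈ P ∧ X ⊆ S ∧ X ⊆ T ∧ ∀ Y ∈ P, Y ⊆ S → Y ⊆ T → Y ⊆ X

/-- `X` is the least upper bound of `S` and `T` in the poset `(P, ⊆)`. -/
def IsLUBIn {n : ℕ} (P : Set (Set (Fin n))) (S T X : Set (Fin n)) : Prop :=
  X ∈ P ∧ S ⊆ X ∧ T ⊆ X ∧ ∀ Y ∈ P, S ⊆ Y → T ⊆ Y → X ⊆ Y

/-- `S^↓`: the downset generated by `S` in `𝓟_f^0`. -/
noncomputable def downSet {n : ℕ} (f : Str n → Bool) (S : Set (Fin n)) :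
    Set (Set (Fin n)) :=
  {X | X ∈ reducedPoset f ∧ X ⊆ S}

/-- `S^↑`: the upset generated by `S` in `𝓟_f^0`. -/
noncomputable def upSet {n : ℕ} (f : Str n → Bool) (S : Set (Fin n)) :
    Set (Set (Fin n)) :=
  {X | X ∈ reducedPoset f ∧ S ⊆ X}

/-- The pair rank `r_f(i,j)`: `max{ρ_f(S ∧ T) : S ∈ 𝕋_i^f, T ∈ 𝕋_j^f, S ∧ T exists in 𝓟_f}`;
`-1` if this set is empty, unless `i` or `j` is a free output, in which case it is
`min{r_f(i), r_f(j)}`. -/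
noncomputable def pairRank {n : ℕ} (f : Str n → Bool) (i j : Fin n) : ℤ :=
  if _h : ∃ r : ℤ, ∃ S ∈ Tset f i, ∃ T ∈ Tset f j, ∃ X, IsGLBIn (structPoset f) S T X ∧
      r = (rank f X : ℤ) then
    sSup {r : ℤ | ∃ S ∈ Tset f i, ∃ T ∈ Tset f j, ∃ X, IsGLBIn (structPoset f) S T X ∧
      r = (rank f X : ℤ)}
  else if Tset f i = ∅ ∨ Tset f j = ∅ then
    min (idxRank f i : ℤ) (idxRank f j : ℤ)
  else -1

/-- Membership in the sublattice generated by a set `S`. -/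
inductive InLatGen {α : Type*} [Lattice α] (S : Set α) : α → Prop
  | base {a : α} : a ∈ S → InLatGen S a
  | sup {a b : α} : InLatGen S a → InLatGen S b → InLatGen S (a ⊔ b)
  | inf {a b : α} : InLatGen S a → InLatGen S b → InLatGen S (a ⊓ b)

/-- For `s ≰_O θ`, `f_s` is the function with support `U_s ∪ U_θ` (w.r.t. `≤_O`). -/
noncomputable def fStr {n : ℕ} (O : Set (Fin n)) (s : Str n) : Str n → Bool :=
  fun t => decide (leO O s t ∨ leO O (theta n) t)

/-- A string `s ∉ D_θ ∪ U_θ` is basic (for `≤_O`) if `s_j = 1` for exactly one `j ∈ O`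
and `s_i = 0` for at most one `i ∈ I = Oᶜ`. -/
def IsBasic {n : ℕ} (O : Set (Fin n)) (s : Str n) : Prop :=
  ¬ leO O s (theta n) ∧ ¬ leO O (theta n) s ∧
  (∃! j, j ∈ O ∧ s j = true) ∧
  (∀ i i', i ∈ Oᶜ → i' ∈ Oᶜ → s i = false → s i' = false → i = i')

section Aux

lemma bool_le_iff {a b : Bool} : a ≤ b ↔ (a = true → b = true) := by
  cases a <;> cases b <;> simp

lemma bool_le_false {b : Bool} (h : b ≤ false) : b = false :=
  le_bot_iff.mp h

lemma eStr_ne_theta {n : ℕ} (k : Fin n) : eStr k ≠ theta n := by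
  intro h
  have := congrFun h k
  simp [eStr, theta] at this

lemma not_mem_Oset {n : ℕ} {f : Str n → Bool} {k : Fin n} (h : k ∉ Oset f) :
    f (eStr k) = false := by
  simpa [Oset] using h

/-- A monotone function vanishes on nonzero strings that are zero on all outputs. -/
lemma vanish {n : ℕ} {O : Set (Fin n)} {f : Str n → Bool}
    (hm : ∀ s t, leO O s t → f s ≤ f t)
    (hout : ∀ k, k ∉ O → f (eStr k) = false)
    {t : Str n} (ht : ∀ l ∈ O, t l = false) (hne : t ≠ theta n) :
    f t = false := by
  have hk : ∃ k, t k = true := by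
    by_contra h
    push_neg at h
    exact hne (funext fun k => by simpa [theta] using h k)
  obtain ⟨k, hkt⟩ := hk
  have hkO : k ∉ O := fun hmem => by simp [ht k hmem] at hkt
  have hle : leO O t (eStr k) := by
    intro l
    constructor
    · intro hl
      simp [ht l hl]
    · intro _
      by_cases hlk : l = k
      · subst hlk; simp [hkt]
      · simp [eStr, hlk]
  have := hm t (eStr k) hle
  rw [hout k hkO] at this
  exact bool_le_false this

lemma isType_good {n : ℕ} {f : Str n → Bool} (h : IsType n f) :
    f (theta n) = true ∧ MonotoneF f := by
  induction h with
  | one => exact ⟨rfl, fun s t _ => le_refl _⟩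
  | @dual n f _ ih =>
    obtain ⟨hθ, hm⟩ := ih
    have hθ' : star f (theta n) = true := by simp [star]
    have hO : Oset (star f) = (Oset f)ᶜ := by
      ext k
      simp [Oset, star, eStr_ne_theta k]
    refine ⟨hθ', ?_⟩
    intro s t hle
    rw [show Oset (star f) = (Oset f)ᶜ from hO] at hle
    rw [bool_le_iff]
    intro hs
    by_cases ht : t = theta n
    · simp [star, ht]
    · have hft : f t = false := by
        by_cases hsθ : s = theta n
        · refine vanish hm (fun k hk => not_mem_Oset hk) (fun l hl => ?_) ht
          have := (hle l).2 (by simp [hl])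
          subst hsθ
          exact bool_le_false this
        · have hfs : f s = false := by
            simp only [star, if_neg hsθ] at hs
            simpa using hs
          have hts : leO (Oset f) t s := by
            intro l
            constructor
            · intro hl; exact (hle l).2 (by simp [hl])
            · intro hl; exact (hle l).1 (by simp [hl])
          have := hm t s hts
          rw [hfs] at this
          exact bool_le_false this
      simp [star, ht, hft]
  | @perm n f σ _ ih =>
    obtain ⟨hθ, hm⟩ := ih
    have hact : permAct σ (theta n) = theta n := rfl
    have hkey : ∀ k : Fin n, permAct σ (eStr k) = eStr (σ k) := by
      intro k
      funext l
      simp only [permAct, eStr]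
      rw [decide_eq_decide]
      exact Equiv.Perm.inv_eq_iff_eq
    have hO : Oset (permComp f σ) = σ ⁻¹' (Oset f) := by
      ext k
      simp [Oset, permComp, hkey, Set.mem_preimage]
    refine ⟨by simpa [permComp, hact] using hθ, ?_⟩
    intro s t hle
    rw [hO] at hle
    have h2 : leO (Oset f) (permAct σ s) (permAct σ t) := by
      intro l
      constructor
      · intro hl
        exact (hle (σ⁻¹ l)).1 (by simp [Set.mem_preimage, hl])
      · intro hl
        exact (hle (σ⁻¹ l)).2 (by simp [Set.mem_preimage, hl])
    exact hm _ _ h2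
  | @tens m n f g _ _ ihf ihg =>
    obtain ⟨hfθ, hfm⟩ := ihf
    obtain ⟨hgθ, hgm⟩ := ihg
    have hθ : tensor f g (theta (m + n)) = true := by
      have h1 : fstStr (theta (m + n)) = theta m := rfl
      have h2 : sndStr (theta (m + n)) = theta n := rfl
      simp [tensor, h1, h2, hfθ, hgθ]
    have hfst : ∀ i : Fin m, fstStr (eStr (Fin.castAdd n i)) = eStr i := by
      intro i; funext l
      simp [fstStr, eStr, Fin.ext_iff]
    have hsnd : ∀ i : Fin m, sndStr (eStr (Fin.castAdd n i)) = theta n := by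
      intro i; funext l
      simp only [sndStr, eStr, theta]
      rw [decide_eq_false_iff_not]
      intro hcon
      have h1 := congrArg Fin.val hcon
      simp only [Fin.coe_natAdd, Fin.coe_castAdd] at h1
      have := i.isLt
      omega
    have hfst' : ∀ j : Fin n, fstStr (eStr (Fin.natAdd m j)) = theta m := by
      intro j; funext l
      simp only [fstStr, eStr, theta]
      rw [decide_eq_false_iff_not]
      intro hcon
      have h1 := congrArg Fin.val hcon
      simp only [Fin.coe_natAdd, Fin.coe_castAdd] at h1
      have := l.isLt
      omega
    have hsnd' : ∀ j : Fin n, sndStr (eStr (Fin.natAdd m j)) = eStr j := by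
      intro j; funext l
      simp only [sndStr, eStr]
      rw [decide_eq_decide, Fin.ext_iff, Fin.ext_iff]
      simp only [Fin.coe_natAdd]
      omega
    have hOc : ∀ i : Fin m, (Fin.castAdd n i ∈ Oset (tensor f g) ↔ i ∈ Oset f) := by
      intro i
      simp [Oset, tensor, hfst, hsnd, hgθ]
    have hOn : ∀ j : Fin n, (Fin.natAdd m j ∈ Oset (tensor f g) ↔ j ∈ Oset g) := by
      intro j
      simp [Oset, tensor, hfst', hsnd', hfθ]
    refine ⟨hθ, ?_⟩
    intro s t hle
    have h1 : leO (Oset f) (fstStr s) (fstStr t) := by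
      intro l
      constructor
      · intro hl; exact (hle (Fin.castAdd n l)).1 ((hOc l).2 hl)
      · intro hl; exact (hle (Fin.castAdd n l)).2 (fun hc => hl ((hOc l).1 hc))
    have h2 : leO (Oset g) (sndStr s) (sndStr t) := by
      intro l
      constructor
      · intro hl; exact (hle (Fin.natAdd m l)).1 ((hOn l).2 hl)
      · intro hl; exact (hle (Fin.natAdd m l)).2 (fun hc => hl ((hOn l).1 hc))
    have hf1 := hfm _ _ h1
    have hg1 := hgm _ _ h2
    rw [bool_le_iff] at hf1 hg1 ⊢
    intro hs
    simp only [tensor, Bool.and_eq_true] at hs ⊢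
    exact ⟨hf1 hs.1, hg1 hs.2⟩

lemma latgen_good {n : ℕ} {O : Set (Fin n)} {f : Str n → Bool}
    (hf : InLatGen {g : Str n → Bool | IsType n g ∧ Oset g = O} f) :
    (∀ s t, leO O s t → f s ≤ f t) ∧ ∀ k, k ∉ O → f (eStr k) = false := by
  induction hf with
  | @base a h =>
    obtain ⟨ht, hO⟩ := h
    have := (isType_good ht).2
    refine ⟨fun s t hle => this s t (by rwa [hO]), fun k hk => ?_⟩
    exact not_mem_Oset (by rwa [hO])
  | @sup a b _ _ iha ihb =>
    refine ⟨fun s t hle => ?_, fun k hk => ?_⟩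
    · exact sup_le_sup (iha.1 s t hle) (ihb.1 s t hle)
    · show a (eStr k) ⊔ b (eStr k) = false
      rw [iha.2 k hk, ihb.2 k hk]
      rfl
  | @inf a b _ _ iha ihb =>
    refine ⟨fun s t hle => ?_, fun k hk => ?_⟩
    · exact inf_le_inf (iha.1 s t hle) (ihb.1 s t hle)
    · show a (eStr k) ⊓ b (eStr k) = false
      rw [iha.2 k hk]
      rfl

lemma toZ_pSet {n : ℕ} (T : Set (Fin n)) (s : Str n) :
    toZ (pSet T s) = if (∀ l ∈ T, s l = false) then 1 else 0 := by
  by_cases h : ∀ l ∈ T, s l = false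
  · have h2 : pSet T s = true := decide_eq_true h
    rw [h2, if_pos h]
    rfl
  · have h2 : pSet T s = false := decide_eq_false h
    rw [h2, if_neg h]
    rfl

lemma toZ_eq_one {b : Bool} (h : toZ b = 1) : b = true := by
  cases b
  · simp [toZ] at h
  · rfl

lemma toZ_eq_zero {b : Bool} (h : toZ b = 0) : b = false := by
  cases b
  · rfl
  · simp [toZ] at h

end Aux

/-- for a regular subtype `f ∈ 𝓡_{n,O}`, `i ∈ I := Oᶜ`, `j ∈ O`, and
`β := 1_n − p_{O∖{j}} + p_{(O∪{i})∖{j}} − p_{O∪{i}} + p_n` (the superchannel chain type),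
one has `f ≤ β` (no signalling from `i` to `j` in `f`) iff `f(e^{i,j}) = 0`. -/
theorem stmt14 {n : ℕ} (O : Set (Fin n)) (f : Str n → Bool)
    (hf : InLatGen {g : Str n → Bool | IsType n g ∧ Oset g = O} f)
    (i j : Fin n) (hi : i ∈ Oᶜ) (hj : j ∈ O)
    (β : Str n → Bool)
    (hβ : ∀ s, toZ (β s) =
      1 - toZ (pSet (O \ {j}) s) + toZ (pSet ((O ∪ {i}) \ {j}) s)
        - toZ (pSet (O ∪ {i}) s) + toZ (pSet (Set.univ : Set (Fin n)) s)) :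
    f ≤ β ↔ f (e2Str i j) = false := by
  have hij : i ≠ j := fun h => hi (h ▸ hj)
  obtain ⟨hmon, hout⟩ := latgen_good hf
  constructor
  · -- f ≤ β → f(e^{i,j}) = 0
    intro hle
    have hβ2 : β (e2Str i j) = false := by
      have h := hβ (e2Str i j)
      rw [toZ_pSet, toZ_pSet, toZ_pSet, toZ_pSet] at h
      have hA : ∀ l ∈ O \ {j}, e2Str i j l = false := by
        intro l hl
        simp only [e2Str, decide_eq_false_iff_not]
        rintro (rfl | rfl)
        · exact hi hl.1
        · exact hl.2 rfl
      have hB : ¬ ∀ l ∈ (O ∪ {i}) \ {j}, e2Str i j l = false := by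
        intro hcon
        have := hcon i ⟨Or.inr rfl, hij⟩
        simp [e2Str] at this
      have hC : ¬ ∀ l ∈ O ∪ {i}, e2Str i j l = false := by
        intro hcon
        have := hcon i (Or.inr rfl)
        simp [e2Str] at this
      have hD : ¬ ∀ l ∈ (Set.univ : Set (Fin n)), e2Str i j l = false := by
        intro hcon
        have := hcon i (Set.mem_univ i)
        simp [e2Str] at this
      rw [if_pos hA, if_neg hB, if_neg hC, if_neg hD] at h
      exact toZ_eq_zero (by omega)
    have := hle (e2Str i j)
    rw [hβ2] at this
    exact bool_le_false this
  · -- f(e^{i,j}) = 0 → f ≤ β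
    intro hfij
    intro s
    rw [bool_le_iff]
    intro hfs
    -- show the two "β = 0" cases are impossible for this s
    have case1 : ¬ ((∀ l ∈ O \ {j}, s l = false) ∧ s i = true) := by
      rintro ⟨hA, hsi⟩
      have hle2 : leO O s (e2Str i j) := by
        intro l
        constructor
        · intro hl
          by_cases hlj : l = j
          · subst hlj
            simp [e2Str]
          · rw [hA l ⟨hl, hlj⟩]
            exact Bool.false_le _
        · intro hl
          simp only [e2Str]
          by_cases hli : l = i
          · subst hli
            simp [hsi]
          · by_cases hlj : l = j
            · exact absurd (hlj ▸ hj) hl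
            · simp [hli, hlj]
      have := hmon s (e2Str i j) hle2
      rw [hfij, hfs] at this
      exact absurd (bool_le_false this) (by decide)
    have case2 : ¬ ((∀ l ∈ O ∪ {i}, s l = false) ∧ s ≠ theta n) := by
      rintro ⟨hC, hne⟩
      have := vanish hmon hout (fun l hl => hC l (Or.inl hl)) hne
      rw [hfs] at this
      exact absurd this (by decide)
    -- now compute toZ (β s) = 1
    have h := hβ s
    rw [toZ_pSet, toZ_pSet, toZ_pSet, toZ_pSet] at h
    apply toZ_eq_one
    rw [h]
    by_cases hA : ∀ l ∈ O \ {j}, s l = false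
    · have hB : ∀ l ∈ (O ∪ {i}) \ {j}, s l = false := by
        intro l hl
        rcases hl.1 with hlO | hli
        · exact hA l ⟨hlO, hl.2⟩
        · rw [Set.mem_singleton_iff] at hli
          subst hli
          by_contra hcon
          rw [Bool.not_eq_false] at hcon
          exact case1 ⟨hA, hcon⟩
      by_cases hC : ∀ l ∈ O ∪ {i}, s l = false
      · have hD : ∀ l ∈ (Set.univ : Set (Fin n)), s l = false := by
          intro l _
          by_contra hcon
          rw [Bool.not_eq_false] at hcon
          apply case2
          refine ⟨hC, fun hθ => ?_⟩
          rw [hθ] at hcon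
          simp [theta] at hcon
        rw [if_pos hA, if_pos hB, if_pos hC, if_pos hD]
        norm_num
      · have hD : ¬ ∀ l ∈ (Set.univ : Set (Fin n)), s l = false := by
          intro hcon
          exact hC fun l _ => hcon l (Set.mem_univ l)
        rw [if_pos hA, if_pos hB, if_neg hC, if_neg hD]
        norm_num
    · have hB : ¬ ∀ l ∈ (O ∪ {i}) \ {j}, s l = false := by
        intro hcon
        exact hA fun l hl => hcon l ⟨Or.inl hl.1, hl.2⟩
      have hC : ¬ ∀ l ∈ O ∪ {i}, s l = false := by
        intro hcon
        exact hA fun l hl => hcon l (Or.inl hl.1)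
      have hD : ¬ ∀ l ∈ (Set.univ : Set (Fin n)), s l = false := by
        intro hcon
        exact hA fun l _ => hcon l (Set.mem_univ l)
      rw [if_neg hA, if_neg hB, if_neg hC, if_neg hD]
      norm_num

end HOT
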